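/- With λ_n as above, for all n ≥ 2 one has λ_n / λ_{n-1} - λ_{n+1} / λ_n ≤ (λ_n^2 - λ_{n-1}^2) / (λ_n^2 λ_{n-1}^2). -/
import Mathlib


noncomputable def lam : ℕ → ℝ
  | 0 => 0
  | n + 1 => (lam n + Real.sqrt (lam n ^ 2 + 4)) / 2

lemma lam_nonneg : ∀ n, 0 ≤ lam n := by
  intro n
  induction n with
  | zero => simp [lam]
  | succ k ih =>
    have h : Real.sqrt (lam k ^ 2 + 4) ≥ 0 := Real.sqrt_nonneg _
    simp only [lam]
    linarith

lemma lam_sq (n : ℕ) : lam (n + 1) ^ 2 = lam n * lam (n + 1) + 1 := by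
  have h : Real.sqrt (lam n ^ 2 + 4) ^ 2 = lam n ^ 2 + 4 :=
    Real.sq_sqrt (by positivity)
  simp only [lam]
  linear_combination h / 4

lemma lam_pos (n : ℕ) : 0 < lam (n + 1) := by
  have h : Real.sqrt (lam n ^ 2 + 4) ≥ 2 := by
    nlinarith [Real.sq_sqrt (show (0:ℝ) ≤ lam n ^ 2 + 4 by positivity),
      Real.sqrt_nonneg (lam n ^ 2 + 4), sq_nonneg (lam n)]
  have := lam_nonneg n
  simp only [lam]
  linarith

lemma lam_lt (n : ℕ) : lam n < lam (n + 1) := by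
  have h : lam n < Real.sqrt (lam n ^ 2 + 4) := by
    have := lam_nonneg n
    nlinarith [Real.sq_sqrt (show (0:ℝ) ≤ lam n ^ 2 + 4 by positivity),
      Real.sqrt_nonneg (lam n ^ 2 + 4)]
  simp only [lam]
  linarith

lemma lam_key (k : ℕ) :
    lam (k + 2) / lam (k + 1) - lam (k + 3) / lam (k + 2) ≤
      (lam (k + 2) ^ 2 - lam (k + 1) ^ 2) / (lam (k + 2) ^ 2 * lam (k + 1) ^ 2) := by
  set a := lam (k + 1) with ha'
  set b := lam (k + 2) with hb'
  set c := lam (k + 3) with hc'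
  have ha : 0 < a := lam_pos k
  have hb : 0 < b := lam_pos (k + 1)
  have hc : 0 < c := lam_pos (k + 2)
  have hab : a < b := lam_lt (k + 1)
  have hbc : b < c := lam_lt (k + 2)
  have h1 : b ^ 2 = a * b + 1 := lam_sq (k + 1)
  have h2 : c ^ 2 = b * c + 1 := lam_sq (k + 2)
  rw [div_sub_div _ _ ha.ne' hb.ne', div_le_div_iff₀ (by positivity) (by positivity)]
  have hAC : (b ^ 2 - a * c) * c = c - a := by linear_combination c * h1 - a * h2
  have hB : (b ^ 2 - a ^ 2) * b = a + b := by linear_combination (a + b) * h1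
  have hkey : c ^ 2 * ((b ^ 2 - a ^ 2) * (a * b)) -
      c ^ 2 * ((b * b - a * c) * (b ^ 2 * a ^ 2)) = a * (b ^ 2 * (c - a) + a + b) := by
    linear_combination (a^2 + a*b^2*c + a*b - a^2*b^3*c - a^2*b^2) * h1 +
      (a*b^3 - a^3*b - a^2*b^4 + a^3*b^2*c + a^3*b^3) * h2
  nlinarith [hkey, mul_pos ha hb, sq_nonneg c, mul_pos ha (sub_pos.mpr (hab.trans hbc)),
    mul_pos (mul_pos ha (mul_pos hb hb)) (sub_pos.mpr (hab.trans hbc)), sq_nonneg b]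

theorem stmt_8 : ∀ n : ℕ, 2 ≤ n →
    lam n / lam (n - 1) - lam (n + 1) / lam n ≤
      (lam n ^ 2 - lam (n - 1) ^ 2) / (lam n ^ 2 * lam (n - 1) ^ 2) := by
  intro n hn
  obtain ⟨k, rfl⟩ := Nat.exists_eq_add_of_le hn
  have e2 : 2 + k - 1 = k + 1 := by omega
  have e3 : 2 + k + 1 = k + 3 := by omega
  have e1 : 2 + k = k + 2 := by omega
  rw [e2, e3, e1]
  exact lam_key k
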